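/- arXiv:2508.14672 — 2 statements merged into one kernel-verified Lean document; each statement's English description precedes it below -/
import Mathlib

section
/- Relational composition of Lagrangian relations is Lagrangian: if R is a Lagrangian subspace of V1 ⊕ V2 (with form ω1 ⊖ ω2) and S is a Lagrangian subspace of V2 ⊕ V3 (with form ω2 ⊖ ω3), then the relational composite S ∘ R = {(v1,v3) : ∃ v2, (v1,v2) ∈ R ∧ (v2,v3) ∈ S} is a Lagrangian subspace of V1 ⊕ V3 with form ω1 ⊖ ω3. -/
/-!
Write `T = S ∘ R`. Isotropy of `T` is immediate: in characteristic 2 the pairings of two elements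
of `T` through `R` and through `S` add up to the pairing in `V₁ ⊕ V₃`. For coisotropy, the
Lagrangian condition identifies `fst R` with the annihilator of `{z | (z, 0) ∈ R}` and `snd R`
with that of `{y | (0, y) ∈ R}` (likewise for `S`), by double orthogonality of nondegenerate
reflexive forms. So a vector `(x₁, x₃) ∈ Tᗮ` has `(x₁, a) ∈ R` and `(b, x₃) ∈ S` for some `a, b`,
and `a - b` lies in `{y | (0, y) ∈ R} + {y | (y, 0) ∈ S}` because it annihilates
`snd R ∩ fst S`, the orthogonal of that sum. Correcting `a` and `b` accordingly gives a common
middle vector.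
-/

open LinearMap

section

variable {K V₁ V₂ V₃ : Type*} [Field K]
  [AddCommGroup V₁] [Module K V₁] [AddCommGroup V₂] [Module K V₂] [AddCommGroup V₃] [Module K V₃]

/-- Lagrangian for `B₁ + B₂`; in characteristic 2 this is the paper's `ω₁ ⊖ ω₂`. -/
def IsLagrangianRel (B₁ : LinearMap.BilinForm K V₁) (B₂ : LinearMap.BilinForm K V₂)
    (L : Submodule K (V₁ × V₂)) : Prop :=
  ∀ v, v ∈ L ↔ ∀ w ∈ L, B₁ v.1 w.1 + B₂ v.2 w.2 = 0

def Submodule.relComp (R : Submodule K (V₁ × V₂)) (S : Submodule K (V₂ × V₃)) :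
    Submodule K (V₁ × V₃) where
  carrier := {p | ∃ y, (p.1, y) ∈ R ∧ (y, p.2) ∈ S}
  zero_mem' := ⟨0, R.zero_mem, S.zero_mem⟩
  add_mem' := by
    rintro p q ⟨a, haR, haS⟩ ⟨b, hbR, hbS⟩
    exact ⟨a + b, R.add_mem haR hbR, S.add_mem haS hbS⟩
  smul_mem' := by
    rintro c p ⟨a, haR, haS⟩
    exact ⟨c • a, R.smul_mem c haR, S.smul_mem c haS⟩

namespace IsLagrangianRel

variable {B₁ : LinearMap.BilinForm K V₁} {B₂ : LinearMap.BilinForm K V₂}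
  {B₃ : LinearMap.BilinForm K V₃} {L R : Submodule K (V₁ × V₂)} {S : Submodule K (V₂ × V₃)}

theorem comap_inl_eq_orthogonal_map_fst (hL : IsLagrangianRel B₁ B₂ L) (hB₁ : B₁.IsRefl) :
    L.comap (inl K V₁ V₂) = B₁.orthogonal (L.map (fst K V₁ V₂)) := by
  ext z
  simp only [Submodule.mem_comap, inl_apply, hL (z, 0), map_zero, LinearMap.zero_apply, add_zero,
    BilinForm.mem_orthogonal_iff, Submodule.mem_map, fst_apply, forall_exists_index, and_imp,
    forall_apply_eq_imp_iff₂]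
  exact forall₂_congr fun w _ => ⟨hB₁ _ _, hB₁ _ _⟩

theorem comap_inr_eq_orthogonal_map_snd (hL : IsLagrangianRel B₁ B₂ L) (hB₂ : B₂.IsRefl) :
    L.comap (inr K V₁ V₂) = B₂.orthogonal (L.map (snd K V₁ V₂)) := by
  ext z
  simp only [Submodule.mem_comap, inr_apply, hL (0, z), map_zero, LinearMap.zero_apply, zero_add,
    BilinForm.mem_orthogonal_iff, Submodule.mem_map, snd_apply, forall_exists_index, and_imp,
    forall_apply_eq_imp_iff₂]
  exact forall₂_congr fun w _ => ⟨hB₂ _ _, hB₂ _ _⟩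

theorem map_fst_eq_orthogonal_comap_inl [FiniteDimensional K V₁] (hL : IsLagrangianRel B₁ B₂ L)
    (hB₁ : B₁.Nondegenerate) (hB₁' : B₁.IsRefl) :
    L.map (fst K V₁ V₂) = B₁.orthogonal (L.comap (inl K V₁ V₂)) := by
  rw [hL.comap_inl_eq_orthogonal_map_fst hB₁', BilinForm.orthogonal_orthogonal hB₁ hB₁']

theorem map_snd_eq_orthogonal_comap_inr [FiniteDimensional K V₂] (hL : IsLagrangianRel B₁ B₂ L)
    (hB₂ : B₂.Nondegenerate) (hB₂' : B₂.IsRefl) :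
    L.map (snd K V₁ V₂) = B₂.orthogonal (L.comap (inr K V₁ V₂)) := by
  rw [hL.comap_inr_eq_orthogonal_map_snd hB₂', BilinForm.orthogonal_orthogonal hB₂ hB₂']

theorem relComp_isotropic [CharP K 2] (hR : IsLagrangianRel B₁ B₂ R)
    (hS : IsLagrangianRel B₂ B₃ S) {v w : V₁ × V₃} (hv : v ∈ R.relComp S)
    (hw : w ∈ R.relComp S) : B₁ v.1 w.1 + B₃ v.2 w.2 = 0 := by
  obtain ⟨y, hvR, hvS⟩ := hv
  obtain ⟨y', hwR, hwS⟩ := hw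
  have h₁ := (hR _).1 hvR _ hwR
  have h₂ := (hS _).1 hvS _ hwS
  linear_combination h₁ + h₂ - B₂ y y' * (CharTwo.two_eq_zero : (2 : K) = 0)

theorem mem_map_fst_of_forall_relComp [FiniteDimensional K V₁] (hR : IsLagrangianRel B₁ B₂ R)
    (hB₁ : B₁.Nondegenerate) (hB₁' : B₁.IsRefl) {x : V₁ × V₃}
    (hx : ∀ w ∈ R.relComp S, B₁ x.1 w.1 + B₃ x.2 w.2 = 0) : x.1 ∈ R.map (fst K V₁ V₂) := by
  rw [hR.map_fst_eq_orthogonal_comap_inl hB₁ hB₁', BilinForm.mem_orthogonal_iff]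
  intro z hz
  have h := hx (z, 0) ⟨0, hz, S.zero_mem⟩
  rw [map_zero, add_zero] at h
  exact hB₁' _ _ h

theorem mem_map_snd_of_forall_relComp [FiniteDimensional K V₃] (hS : IsLagrangianRel B₂ B₃ S)
    (hB₃ : B₃.Nondegenerate) (hB₃' : B₃.IsRefl) {x : V₁ × V₃}
    (hx : ∀ w ∈ R.relComp S, B₁ x.1 w.1 + B₃ x.2 w.2 = 0) : x.2 ∈ S.map (snd K V₂ V₃) := by
  rw [hS.map_snd_eq_orthogonal_comap_inr hB₃ hB₃', BilinForm.mem_orthogonal_iff]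
  intro z hz
  have h := hx (0, z) ⟨0, R.zero_mem, hz⟩
  rw [map_zero, zero_add] at h
  exact hB₃' _ _ h

theorem sub_mem_comap_inr_sup_comap_inl_of_forall_relComp [CharP K 2] [FiniteDimensional K V₂]
    (hR : IsLagrangianRel B₁ B₂ R) (hS : IsLagrangianRel B₂ B₃ S) (hB₂ : B₂.Nondegenerate)
    (hB₂' : B₂.IsRefl) {x : V₁ × V₃} (hx : ∀ w ∈ R.relComp S, B₁ x.1 w.1 + B₃ x.2 w.2 = 0)
    {a b : V₂} (ha : (x.1, a) ∈ R) (hb : (b, x.2) ∈ S) :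
    a - b ∈ R.comap (inr K V₁ V₂) ⊔ S.comap (inl K V₂ V₃) := by
  rw [← BilinForm.orthogonal_orthogonal hB₂ hB₂' (_ ⊔ _), BilinForm.mem_orthogonal_iff]
  intro y hy
  have hyR : y ∈ R.map (snd K V₁ V₂) := by
    rw [hR.map_snd_eq_orthogonal_comap_inr hB₂ hB₂']
    exact BilinForm.orthogonal_le le_sup_left hy
  have hyS : y ∈ S.map (fst K V₂ V₃) := by
    rw [hS.map_fst_eq_orthogonal_comap_inl hB₂ hB₂']
    exact BilinForm.orthogonal_le le_sup_right hy
  obtain ⟨⟨c₁, y₁⟩, hcR, hy₁⟩ := hyR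
  obtain rfl : y₁ = y := hy₁
  obtain ⟨⟨y₂, c₃⟩, hcS, hy₂⟩ := hyS
  obtain rfl : y₂ = y₁ := hy₂
  have h₁ := (hR _).1 ha _ hcR
  have h₂ := (hS _).1 hb _ hcS
  have h₃ := hx (c₁, c₃) ⟨_, hcR, hcS⟩
  apply hB₂'
  rw [map_sub, LinearMap.sub_apply]
  linear_combination h₁ - h₂ - h₃ + B₃ x.2 c₃ * (CharTwo.two_eq_zero : (2 : K) = 0)

theorem relComp [CharP K 2] [FiniteDimensional K V₁] [FiniteDimensional K V₂]
    [FiniteDimensional K V₃] (hR : IsLagrangianRel B₁ B₂ R) (hS : IsLagrangianRel B₂ B₃ S)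
    (hB₁ : B₁.Nondegenerate) (hB₁' : B₁.IsRefl) (hB₂ : B₂.Nondegenerate) (hB₂' : B₂.IsRefl)
    (hB₃ : B₃.Nondegenerate) (hB₃' : B₃.IsRefl) : IsLagrangianRel B₁ B₃ (R.relComp S) := by
  refine fun x => ⟨fun hx _ hw => hR.relComp_isotropic hS hx hw, fun hx => ?_⟩
  obtain ⟨⟨x₁, a⟩, ha, rfl : x₁ = x.1⟩ := hR.mem_map_fst_of_forall_relComp hB₁ hB₁' hx
  obtain ⟨⟨b, x₃⟩, hb, rfl : x₃ = x.2⟩ := hS.mem_map_snd_of_forall_relComp hB₃ hB₃' hx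
  obtain ⟨p, hp, q, hq, hpq⟩ := Submodule.mem_sup.1 <|
    hR.sub_mem_comap_inr_sup_comap_inl_of_forall_relComp hS hB₂ hB₂' hx ha hb
  have hab : a - p = b + q := by
    rw [sub_eq_iff_eq_add, add_assoc, add_comm q, hpq, add_sub_cancel]
  refine ⟨a - p, ?_, hab ▸ ?_⟩
  · simpa using R.sub_mem ha hp
  · simpa using S.add_mem hb hq

end IsLagrangianRel

end

/-- Relational composition of Lagrangian relations between symplectic
`F2`-vector spaces is Lagrangian. -/
theorem stmt_7
    (V1 V2 V3 : Type*)
    [AddCommGroup V1] [Module (ZMod 2) V1] [FiniteDimensional (ZMod 2) V1]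
    [AddCommGroup V2] [Module (ZMod 2) V2] [FiniteDimensional (ZMod 2) V2]
    [AddCommGroup V3] [Module (ZMod 2) V3] [FiniteDimensional (ZMod 2) V3]
    (ω1 : V1 →ₗ[ZMod 2] V1 →ₗ[ZMod 2] ZMod 2)
    (ω2 : V2 →ₗ[ZMod 2] V2 →ₗ[ZMod 2] ZMod 2)
    (ω3 : V3 →ₗ[ZMod 2] V3 →ₗ[ZMod 2] ZMod 2)
    (h1alt : ∀ v, ω1 v v = 0) (h1nd : ∀ v, (∀ w, ω1 v w = 0) → v = 0)
    (h2alt : ∀ v, ω2 v v = 0) (h2nd : ∀ v, (∀ w, ω2 v w = 0) → v = 0)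
    (h3alt : ∀ v, ω3 v v = 0) (h3nd : ∀ v, (∀ w, ω3 v w = 0) → v = 0)
    (R : Submodule (ZMod 2) (V1 × V2))
    (S : Submodule (ZMod 2) (V2 × V3))
    (hR : ∀ v, v ∈ R ↔ ∀ w ∈ R, ω1 v.1 w.1 + ω2 v.2 w.2 = 0)
    (hS : ∀ v, v ∈ S ↔ ∀ w ∈ S, ω2 v.1 w.1 + ω3 v.2 w.2 = 0) :
    ∃ T : Submodule (ZMod 2) (V1 × V3),
      (T : Set (V1 × V3)) =
        {p | ∃ v2 : V2, (p.1, v2) ∈ R ∧ (v2, p.2) ∈ S} ∧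
      (∀ v, v ∈ T ↔ ∀ w ∈ T, ω1 v.1 w.1 + ω3 v.2 w.2 = 0) := by
  have hrefl₁ : ω1.IsRefl := LinearMap.IsAlt.isRefl h1alt
  have hrefl₂ : ω2.IsRefl := LinearMap.IsAlt.isRefl h2alt
  have hrefl₃ : ω3.IsRefl := LinearMap.IsAlt.isRefl h3alt
  refine ⟨R.relComp S, rfl, IsLagrangianRel.relComp hR hS
    (hrefl₁.nondegenerate_iff_separatingLeft.2 h1nd) hrefl₁
    (hrefl₂.nondegenerate_iff_separatingLeft.2 h2nd) hrefl₂
    (hrefl₃.nondegenerate_iff_separatingLeft.2 h3nd) hrefl₃⟩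
end

section
/- Doubling linear relations yields Lagrangian relations: if R ⊆ F2^n × F2^m is a linear subspace (relation), then the subspace L(R) = {((x,α),(y,β)) ∈ (F2^n ⊕ F2^n) × (F2^m ⊕ F2^m) : (x,y) ∈ R and ∀ (x',y') ∈ R, ⟨α,x'⟩ + ⟨β,y'⟩ = 0} is a Lagrangian subspace of (F2^n ⊕ F2^n) ⊕ (F2^m ⊕ F2^m) with respect to the symplectic form Ω(((x,α),(y,β)),((x',α'),(y',β'))) = ⟨x,α'⟩+⟨x',α⟩+⟨y,β'⟩+⟨y',β⟩. -/
open Finset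

section aux

variable (n m : ℕ)

/-- The dot-product bilinear form on `F2^n × F2^m`. -/
noncomputable def dotB : LinearMap.BilinForm (ZMod 2) ((Fin n → ZMod 2) × (Fin m → ZMod 2)) :=
  LinearMap.mk₂ (ZMod 2)
    (fun p q => (∑ i, p.1 i * q.1 i) + (∑ i, p.2 i * q.2 i))
    (by intro p p' q; simp [Prod.fst_add, Prod.snd_add, add_mul, Finset.sum_add_distrib]; ring)
    (by intro c p q; simp [Finset.mul_sum, mul_assoc, mul_add])
    (by intro p q q'; simp [mul_add, Finset.sum_add_distrib]; ring)
    (by intro c p q; simp [Finset.mul_sum, mul_add]; ring_nf; simp [mul_assoc, mul_comm, mul_left_comm, add_comm])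

lemma dotB_apply (p q : (Fin n → ZMod 2) × (Fin m → ZMod 2)) :
    dotB n m p q = (∑ i, p.1 i * q.1 i) + (∑ i, p.2 i * q.2 i) := rfl

lemma dotB_symm (p q : (Fin n → ZMod 2) × (Fin m → ZMod 2)) :
    dotB n m p q = dotB n m q p := by
  simp [dotB_apply, mul_comm]

lemma dotB_refl : (dotB n m).IsRefl := by
  intro p q h
  rwa [dotB_symm] at h

lemma dotB_nondegenerate : (dotB n m).Nondegenerate := by
  have sep : ∀ p, (∀ q, dotB n m p q = 0) → p = 0 := by
    intro p h
    ext i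
    · have := h (Pi.single i 1, 0)
      simpa [dotB_apply, Pi.single_apply, Finset.mul_sum, mul_ite] using this
    · have := h (0, Pi.single i 1)
      simpa [dotB_apply, Pi.single_apply, Finset.mul_sum, mul_ite] using this
  refine ⟨sep, fun p h => sep p fun q => ?_⟩
  rw [dotB_symm]; exact h q

end aux

/-- Doubling a linear relation `R ⊆ F2^n × F2^m` yields a Lagrangian relation
`L(R) = {((x,α),(y,β)) : (x,y) ∈ R ∧ ∀ (x',y') ∈ R, ⟨α,x'⟩ + ⟨β,y'⟩ = 0}`
for the symplectic form
`Ω(((x,α),(y,β)),((x',α'),(y',β'))) = ⟨x,α'⟩+⟨x',α⟩+⟨y,β'⟩+⟨y',β⟩`. -/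
theorem stmt_16 (n m : ℕ)
    (R : Submodule (ZMod 2) ((Fin n → ZMod 2) × (Fin m → ZMod 2)))
    (Ω : (((Fin n → ZMod 2) × (Fin n → ZMod 2)) × ((Fin m → ZMod 2) × (Fin m → ZMod 2))) →
         (((Fin n → ZMod 2) × (Fin n → ZMod 2)) × ((Fin m → ZMod 2) × (Fin m → ZMod 2))) →
         ZMod 2)
    (hΩ : ∀ v w, Ω v w =
      (∑ i, v.1.1 i * w.1.2 i) + (∑ i, w.1.1 i * v.1.2 i) +
      (∑ i, v.2.1 i * w.2.2 i) + (∑ i, w.2.1 i * v.2.2 i)) :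
    ∃ T : Submodule (ZMod 2)
        (((Fin n → ZMod 2) × (Fin n → ZMod 2)) × ((Fin m → ZMod 2) × (Fin m → ZMod 2))),
      (T : Set (((Fin n → ZMod 2) × (Fin n → ZMod 2)) × ((Fin m → ZMod 2) × (Fin m → ZMod 2)))) =
        {p | (p.1.1, p.2.1) ∈ R ∧
          ∀ q ∈ R, (∑ i, p.1.2 i * q.1 i) + (∑ i, p.2.2 i * q.2 i) = 0} ∧
      (∀ v, v ∈ T ↔ ∀ w ∈ T, Ω v w = 0) := by
  classical
  set B := dotB n m with hB
  set Rp : Submodule (ZMod 2) ((Fin n → ZMod 2) × (Fin m → ZMod 2)) := B.orthogonal R with hRp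
  -- linear maps extracting the "vector" and "covector" parts
  let f : (((Fin n → ZMod 2) × (Fin n → ZMod 2)) × ((Fin m → ZMod 2) × (Fin m → ZMod 2)))
      →ₗ[ZMod 2] ((Fin n → ZMod 2) × (Fin m → ZMod 2)) :=
    ((LinearMap.fst _ _ _).comp (LinearMap.fst _ _ _)).prod
      ((LinearMap.fst _ _ _).comp (LinearMap.snd _ _ _))
  let g : (((Fin n → ZMod 2) × (Fin n → ZMod 2)) × ((Fin m → ZMod 2) × (Fin m → ZMod 2)))
      →ₗ[ZMod 2] ((Fin n → ZMod 2) × (Fin m → ZMod 2)) :=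
    ((LinearMap.snd _ _ _).comp (LinearMap.fst _ _ _)).prod
      ((LinearMap.snd _ _ _).comp (LinearMap.snd _ _ _))
  refine ⟨(Submodule.comap f R) ⊓ (Submodule.comap g Rp), ?_, ?_⟩
  · ext p
    simp only [Submodule.mem_inf, Submodule.mem_comap, Set.mem_setOf_eq, SetLike.mem_coe]
    constructor
    · rintro ⟨h1, h2⟩
      refine ⟨h1, fun q hq => ?_⟩
      have := LinearMap.BilinForm.mem_orthogonal_iff.mp h2 q hq
      have h3 : B q (g p) = 0 := this
      rw [dotB_symm] at h3
      exact h3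
    · rintro ⟨h1, h2⟩
      refine ⟨h1, LinearMap.BilinForm.mem_orthogonal_iff.mpr fun q hq => ?_⟩
      show B q (g p) = 0
      rw [dotB_symm]
      exact h2 q hq
  · intro v
    constructor
    · rintro ⟨hv1, hv2⟩ w ⟨hw1, hw2⟩
      rw [hΩ]
      have e1 : B (f v) (g w) = 0 :=
        LinearMap.BilinForm.mem_orthogonal_iff.mp hw2 (f v) hv1
      have e2 : B (f w) (g v) = 0 :=
        LinearMap.BilinForm.mem_orthogonal_iff.mp hv2 (f w) hw1
      have e1' : (∑ i, v.1.1 i * w.1.2 i) + (∑ i, v.2.1 i * w.2.2 i) = 0 := e1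
      have e2' : (∑ i, w.1.1 i * v.1.2 i) + (∑ i, w.2.1 i * v.2.2 i) = 0 := e2
      linear_combination e1' + e2'
    · intro h
      -- first: g v ∈ Rp
      have hgv : g v ∈ Rp := by
        refine LinearMap.BilinForm.mem_orthogonal_iff.mpr fun q hq => ?_
        have hw : ((q.1, 0), (q.2, 0)) ∈
            (Submodule.comap f R) ⊓ (Submodule.comap g Rp) := by
          constructor
          · show ((q.1, q.2) : _) ∈ R; simpa using hq
          · show ((0, 0) : (Fin n → ZMod 2) × (Fin m → ZMod 2)) ∈ Rp
            exact Rp.zero_mem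
        have := h _ hw
        rw [hΩ] at this
        show B q (g v) = 0
        rw [dotB_symm]
        have : (∑ i, q.1 i * v.1.2 i) + (∑ i, q.2 i * v.2.2 i) = 0 := by
          simpa using this
        calc B (g v) q = (∑ i, v.1.2 i * q.1 i) + (∑ i, v.2.2 i * q.2 i) := rfl
          _ = (∑ i, q.1 i * v.1.2 i) + (∑ i, q.2 i * v.2.2 i) := by
              simp [mul_comm]
          _ = 0 := this
      have hfv : f v ∈ R := by
        have key : f v ∈ B.orthogonal Rp := by
          refine LinearMap.BilinForm.mem_orthogonal_iff.mpr fun q hq => ?_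
          have hw : ((0, q.1), (0, q.2)) ∈
              (Submodule.comap f R) ⊓ (Submodule.comap g Rp) := by
            constructor
            · show ((0, 0) : (Fin n → ZMod 2) × (Fin m → ZMod 2)) ∈ R
              exact R.zero_mem
            · show ((q.1, q.2) : _) ∈ Rp; simpa using hq
          have := h _ hw
          rw [hΩ] at this
          have h0 : (∑ i, v.1.1 i * q.1 i) + (∑ i, v.2.1 i * q.2 i) = 0 := by
            simpa using this
          show B q (f v) = 0
          rw [dotB_symm]
          calc B (f v) q = (∑ i, v.1.1 i * q.1 i) + (∑ i, v.2.1 i * q.2 i) := rfl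
            _ = 0 := h0
        rw [hRp, LinearMap.BilinForm.orthogonal_orthogonal
          (dotB_nondegenerate n m) (dotB_refl n m)] at key
        exact key
      exact ⟨hfv, hgv⟩
end
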